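/- arXiv:2306.08462 — 2 statements merged into one kernel-verified Lean document; each statement's English description precedes it below -/
import Mathlib

section
/- Let N ≥ 1, 0<r≤1, and set 1/r' := 1 − 1/r. Then there exist constants c_r, C_r > 0 depending only on r (and N) such that for every measurable function f on ℝ^N and every A > 0: (a) if ‖f‖_{L^{r,∞}(ℝ^N)} ≤ A, then for every measurable set E ⊆ ℝ^N with 0<|E|<∞ there exists a measurable subset E' ⊆ E with |E'| ≥ |E|/2 such that |∫_{E'} f| ≤ C_r A |E|^{1/r'}; and (b) conversely, if f is locally integrable and for every measurable set E with 0<|E|<∞ there exists a measurable E' ⊆ E with |E'| ≥ |E|/2 and |∫_{E'} f| ≤ A |E|^{1/r'}, then ‖f‖_{L^{r,∞}(ℝ^N)} ≤ C_r A. -/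
open MeasureTheory Metric Bornology
open scoped ENNReal

noncomputable section

abbrev En (N : ℕ) := EuclideanSpace ℝ (Fin N)

/-- The weak-`L^r` quasi-norm `sup_{t>0} t |{|f|>t}|^{1/r}`. -/
def wkNorm {N : ℕ} (r : ℝ) (f : En N → ℂ) : ℝ≥0∞ :=
  ⨆ (t : ℝ) (_ : 0 < t), ENNReal.ofReal t * (volume {x : En N | t < ‖f x‖}) ^ (1/r)

/-- Auxiliary lemma for the converse direction: if a bounded set `Eb` of positive finite
measure is such that `t/2 ≤ u (g x)` on `Eb` for a norm-dominated linear functional `u`,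
then `t * |Eb|^{1/r} ≤ 4A`. -/
lemma auxCase {N : ℕ} {f g : En N → ℂ} (hf : LocallyIntegrable f volume)
    (hfg : f =ᵐ[volume] g)
    {r A t : ℝ} (hr0 : 0 < r) (ht : 0 < t)
    (h : ∀ E : Set (En N), MeasurableSet E → 0 < volume E → volume E < ⊤ →
      ∃ E' : Set (En N), E' ⊆ E ∧ MeasurableSet E' ∧
        volume E / 2 ≤ volume E' ∧
        ‖∫ x in E', f x‖ ≤ A * (volume E).toReal ^ (1 - 1/r))
    (u : ℂ →L[ℝ] ℝ) (hu : ∀ z, |u z| ≤ ‖z‖)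
    {Eb : Set (En N)} (hEbm : MeasurableSet Eb) (hEbb : IsBounded Eb)
    (hEb0 : 0 < volume Eb) (hEbt : volume Eb < ⊤)
    (hlb : ∀ x ∈ Eb, t/2 ≤ u (g x)) :
    t * (volume Eb).toReal ^ (1/r) ≤ 4 * A := by
  set β : ℝ := (volume Eb).toReal with hβdef
  have hβ : 0 < β := ENNReal.toReal_pos hEb0.ne' hEbt.ne
  obtain ⟨F, hFE, hFm, hFhalf, hFbd⟩ := h Eb hEbm hEb0 hEbt
  have hFb : IsBounded F := hEbb.subset hFE
  have hFt : volume F < ⊤ := lt_of_le_of_lt (measure_mono hFE) hEbt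
  have hintf : IntegrableOn f F volume :=
    (hf.integrableOn_isCompact hFb.isCompact_closure).mono_set subset_closure
  have hintg : IntegrableOn g F volume :=
    hintf.congr (ae_restrict_of_ae hfg)
  have hIeq : ∫ x in F, f x = ∫ x in F, g x :=
    integral_congr_ae (ae_restrict_of_ae hfg)
  have hc1 : (t/2) * (volume F).toReal ≤ ∫ x in F, u (g x) :=
    setIntegral_ge_of_const_le_real hFm hFt.ne (fun x hx => hlb x (hFE hx))
      (u.integrable_comp hintg)
  have hc2 : ∫ x in F, u (g x) = u (∫ x in F, g x) :=
    u.integral_comp_comm hintg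
  have hc3 : u (∫ x in F, g x) ≤ ‖∫ x in F, f x‖ := by
    rw [hIeq]
    exact (le_abs_self _).trans (hu _)
  have hFhalf' : β / 2 ≤ (volume F).toReal := by
    have := ENNReal.toReal_mono hFt.ne hFhalf
    rwa [ENNReal.toReal_div, ENNReal.toReal_ofNat] at this
  have hmain : (t/2) * (β/2) ≤ A * β ^ (1 - 1/r) := by
    calc (t/2) * (β/2) ≤ (t/2) * (volume F).toReal := by
          apply mul_le_mul_of_nonneg_left hFhalf' (by positivity)
      _ ≤ ∫ x in F, u (g x) := hc1
      _ ≤ ‖∫ x in F, f x‖ := by rw [hc2]; exact hc3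
      _ ≤ A * β ^ (1 - 1/r) := hFbd
  have hpow : β ^ (1/r) = β * β ^ (1/r - 1) := by
    have h' := Real.rpow_add hβ 1 (1/r - 1)
    rw [Real.rpow_one, show (1:ℝ) + (1/r - 1) = 1/r by ring] at h'
    exact h'
  have hpow2 : β ^ (1 - 1/r) * β ^ (1/r - 1) = 1 := by
    rw [← Real.rpow_add hβ]; norm_num
  have htβ : t * β ≤ 4 * (A * β ^ (1 - 1/r)) := by nlinarith [hmain]
  calc t * β ^ (1/r) = (t * β) * β ^ (1/r - 1) := by rw [hpow]; ring
    _ ≤ (4 * (A * β ^ (1 - 1/r))) * β ^ (1/r - 1) := by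
        apply mul_le_mul_of_nonneg_right htβ (Real.rpow_nonneg hβ.le _)
    _ = 4 * A * (β ^ (1 - 1/r) * β ^ (1/r - 1)) := by ring
    _ = 4 * A := by rw [hpow2]; ring

/-- Lemma 4.1 / `weak` of the paper (duality characterization of weak `L^r`, `0<r≤1`).
Here `1/r' = 1 − 1/r ≤ 0`, so the exponent `1−1/r` is used directly. -/
theorem statement12
    (N : ℕ) (hN : 1 ≤ N) (r : ℝ) (hr0 : 0 < r) (hr1 : r ≤ 1) :
    ∃ C : ℝ, 0 < C ∧
      ((∀ (f : En N → ℂ), Measurable f → ∀ A : ℝ, 0 < A →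
        wkNorm r f ≤ ENNReal.ofReal A →
        ∀ E : Set (En N), MeasurableSet E → 0 < volume E → volume E < ⊤ →
          ∃ E' : Set (En N), E' ⊆ E ∧ MeasurableSet E' ∧
            volume E / 2 ≤ volume E' ∧ IntegrableOn f E' volume ∧
            ‖∫ x in E', f x‖ ≤ C * A * (volume E).toReal ^ (1 - 1/r)) ∧
      (∀ (f : En N → ℂ), LocallyIntegrable f volume → ∀ A : ℝ, 0 < A →
        (∀ E : Set (En N), MeasurableSet E → 0 < volume E → volume E < ⊤ →
          ∃ E' : Set (En N), E' ⊆ E ∧ MeasurableSet E' ∧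
            volume E / 2 ≤ volume E' ∧
            ‖∫ x in E', f x‖ ≤ A * (volume E).toReal ^ (1 - 1/r)) →
        wkNorm r f ≤ ENNReal.ofReal (C * A))) := by
  have hrinv : (0:ℝ) < 1/r := by positivity
  refine ⟨4 ^ ((1:ℝ) + 1/r), by positivity, ?_, ?_⟩
  · -- Part (a)
    intro f hfm A hA hw E hEm hE0 hEt
    set m : ℝ := (volume E).toReal with hmdef
    have hm : 0 < m := ENNReal.toReal_pos hE0.ne' hEt.ne
    set lam : ℝ := A * (2/m) ^ (1/r) with hlamdef
    have hlam : 0 < lam := by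
      have : (0:ℝ) < (2/m) ^ (1/r) := Real.rpow_pos_of_pos (by positivity) _
      positivity
    have hwt : ENNReal.ofReal lam * (volume {x : En N | lam < ‖f x‖}) ^ (1/r)
        ≤ ENNReal.ofReal A := by
      refine le_trans ?_ hw
      rw [wkNorm]
      exact le_iSup₂ (f := fun (t:ℝ) (_ : 0 < t) =>
        ENNReal.ofReal t * (volume {x : En N | t < ‖f x‖}) ^ (1/r)) lam hlam
    -- deduce measure bound
    have hAlam : A / lam = (m/2) ^ (1/r) := by
      rw [hlamdef, div_mul_eq_div_div, div_self hA.ne', one_div,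
        ← Real.inv_rpow (by positivity), inv_div]
    have hS : volume {x : En N | lam < ‖f x‖} ≤ volume E / 2 := by
      have h1 : (volume {x : En N | lam < ‖f x‖}) ^ (1/r)
          ≤ ENNReal.ofReal (A / lam) := by
        rw [ENNReal.ofReal_div_of_pos hlam]
        rw [ENNReal.le_div_iff_mul_le (Or.inl (by simp [hlam.ne', ENNReal.ofReal_eq_zero, hlam.not_ge]))
          (Or.inl ENNReal.ofReal_ne_top)]
        rw [mul_comm]; exact hwt
      have h2 : volume {x : En N | lam < ‖f x‖}
          ≤ (ENNReal.ofReal (A / lam)) ^ r := by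
        have := ENNReal.rpow_le_rpow h1 hr0.le
        rwa [← ENNReal.rpow_mul, one_div, inv_mul_cancel₀ hr0.ne', ENNReal.rpow_one] at this
      refine h2.trans ?_
      rw [hAlam, ENNReal.ofReal_rpow_of_nonneg (by positivity) hr0.le,
        ← Real.rpow_mul (by positivity), one_div, inv_mul_cancel₀ hr0.ne', Real.rpow_one,
        ENNReal.ofReal_div_of_pos (by norm_num), ENNReal.ofReal_ofNat,
        ENNReal.ofReal_toReal hEt.ne]
    refine ⟨E \ {x | lam < ‖f x‖},
      Set.diff_subset, hEm.diff (measurableSet_lt measurable_const hfm.norm), ?_, ?_, ?_⟩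
    · have hcover : E ⊆ (E \ {x | lam < ‖f x‖}) ∪ {x : En N | lam < ‖f x‖} := by
        intro x hx
        by_cases h : lam < ‖f x‖
        · exact Or.inr h
        · exact Or.inl ⟨hx, h⟩
      have h' : volume E ≤ volume (E \ {x | lam < ‖f x‖}) + volume E / 2 :=
        ((measure_mono hcover).trans (measure_union_le _ _)).trans
          (add_le_add_right hS _)
      have key : volume E / 2 + volume E / 2 ≤
          volume (E \ {x | lam < ‖f x‖}) + volume E / 2 := by
        rw [ENNReal.add_halves]; exact h'
      exact (ENNReal.add_le_add_iff_right
        (ENNReal.div_lt_top hEt.ne (by norm_num)).ne).mp key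
    · -- integrability
      refine Integrable.mono' (g := fun _ => lam)
        (integrableOn_const (lt_of_le_of_lt (measure_mono Set.diff_subset) hEt).ne)
        hfm.aestronglyMeasurable.restrict ?_
      refine ae_restrict_of_forall_mem
        (hEm.diff (measurableSet_lt measurable_const hfm.norm)) ?_
      intro x hx
      exact not_lt.mp hx.2
    · -- norm bound
      have hnorm : ‖∫ x in E \ {x | lam < ‖f x‖}, f x‖
          ≤ lam * (volume (E \ {x | lam < ‖f x‖})).toReal :=
        norm_setIntegral_le_of_norm_le_const
          (lt_of_le_of_lt (measure_mono Set.diff_subset) hEt)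
          (fun x hx => not_lt.mp hx.2)
      have htr : (volume (E \ {x | lam < ‖f x‖})).toReal ≤ m :=
        ENNReal.toReal_mono hEt.ne (measure_mono Set.diff_subset)
      have h2C : (2:ℝ)^(1/r) ≤ 4^((1:ℝ)+1/r) := by
        calc (2:ℝ)^(1/r) ≤ 4^(1/r) :=
              Real.rpow_le_rpow (by norm_num) (by norm_num) hrinv.le
          _ ≤ 4^((1:ℝ)+1/r) :=
              Real.rpow_le_rpow_of_exponent_le (by norm_num) (by linarith)
      have hdiv : (2/m)^(1/r) = 2^(1/r) / m^(1/r) := Real.div_rpow (by norm_num : (0:ℝ) ≤ 2) hm.le _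
      have hms : m ^ (1-1/r) = m / m^(1/r) := by
        rw [Real.rpow_sub hm, Real.rpow_one]
      have hlmeq : lam * m = 2^(1/r) * A * m^(1-1/r) := by
        rw [hlamdef, hdiv, hms]; ring
      have hlm : lam * m ≤ 4^((1:ℝ)+1/r) * A * m^(1-1/r) := by
        rw [hlmeq]
        apply mul_le_mul_of_nonneg_right
          (mul_le_mul_of_nonneg_right h2C hA.le) (Real.rpow_nonneg hm.le _)
      calc ‖∫ x in E \ {x | lam < ‖f x‖}, f x‖
          ≤ lam * (volume (E \ {x | lam < ‖f x‖})).toReal := hnorm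
        _ ≤ lam * m := mul_le_mul_of_nonneg_left htr hlam.le
        _ ≤ 4^((1:ℝ)+1/r) * A * m^(1-1/r) := hlm
  · -- Part (b)
    intro f hf A hA h
    set g : En N → ℂ := hf.aestronglyMeasurable.mk f with hgdef
    have hgm : Measurable g := hf.aestronglyMeasurable.stronglyMeasurable_mk.measurable
    have hfg : f =ᵐ[volume] g := hf.aestronglyMeasurable.ae_eq_mk
    rw [wkNorm]
    refine iSup₂_le fun t ht => ?_
    have hvol : volume {x : En N | t < ‖f x‖} = volume {x : En N | t < ‖g x‖} :=
      measure_congr (hfg.mono fun x hx => by show (t < ‖f x‖) = (t < ‖g x‖); rw [hx])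
    rw [hvol]
    set S : Set (En N) := {x | t < ‖g x‖} with hSdef
    have hSm : MeasurableSet S := measurableSet_lt measurable_const hgm.norm
    set CA : ℝ := 4 ^ ((1:ℝ) + 1/r) * A with hCAdef
    have hCA : 0 < CA := by positivity
    have key : ∀ E : Set (En N), MeasurableSet E → IsBounded E → E ⊆ S →
        volume E ≤ ENNReal.ofReal ((CA / t) ^ r) := by
      intro E hEm hEb hES
      rcases eq_or_ne (volume E) 0 with h0 | h0
      · simp [h0]
      have hE0 : 0 < volume E := pos_iff_ne_zero.mpr h0
      obtain ⟨R, hR⟩ := hEb.subset_closedBall 0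
      have hEt : volume E < ⊤ :=
        lt_of_le_of_lt (measure_mono hR) measure_closedBall_lt_top
      have hE4 : volume E / 4 < ⊤ := ENNReal.div_lt_top hEt.ne (by norm_num)
      have hquarter : ∃ u : ℂ →L[ℝ] ℝ, (∀ z, |u z| ≤ ‖z‖) ∧
          volume E / 4 ≤ volume (E ∩ {x | t/2 < u (g x)}) := by
        by_contra hcon
        push_neg at hcon
        have hu1 : ∀ z : ℂ, |(Complex.reCLM : ℂ →L[ℝ] ℝ) z| ≤ ‖z‖ := fun z => by
          simpa using Complex.abs_re_le_norm z
        have hu2 : ∀ z : ℂ, |(-Complex.reCLM : ℂ →L[ℝ] ℝ) z| ≤ ‖z‖ := fun z => by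
          simpa [abs_neg] using Complex.abs_re_le_norm z
        have hu3 : ∀ z : ℂ, |(Complex.imCLM : ℂ →L[ℝ] ℝ) z| ≤ ‖z‖ := fun z => by
          simpa using Complex.abs_im_le_norm z
        have hu4 : ∀ z : ℂ, |(-Complex.imCLM : ℂ →L[ℝ] ℝ) z| ≤ ‖z‖ := fun z => by
          simpa [abs_neg] using Complex.abs_im_le_norm z
        have hcover : E ⊆ (E ∩ {x | t/2 < (Complex.reCLM : ℂ →L[ℝ] ℝ) (g x)}) ∪
            ((E ∩ {x | t/2 < (-Complex.reCLM : ℂ →L[ℝ] ℝ) (g x)}) ∪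
            ((E ∩ {x | t/2 < (Complex.imCLM : ℂ →L[ℝ] ℝ) (g x)}) ∪
             (E ∩ {x | t/2 < (-Complex.imCLM : ℂ →L[ℝ] ℝ) (g x)}))) := by
          intro x hx
          have hxS : t < ‖g x‖ := hES hx
          have habs : t/2 < |(g x).re| ∨ t/2 < |(g x).im| := by
            by_contra hc
            push_neg at hc
            have hsum : ‖g x‖ ≤ |(g x).re| + |(g x).im| := by
              simpa using Complex.norm_le_abs_re_add_abs_im (g x)
            linarith [hc.1, hc.2]
          rcases habs with hre | him
          · rcases lt_abs.mp hre with h1 | h1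
            · exact Or.inl ⟨hx, h1⟩
            · exact Or.inr (Or.inl ⟨hx, h1⟩)
          · rcases lt_abs.mp him with h1 | h1
            · exact Or.inr (Or.inr (Or.inl ⟨hx, h1⟩))
            · exact Or.inr (Or.inr (Or.inr ⟨hx, h1⟩))
        have hsum4 : volume E / 4 + (volume E / 4 + (volume E / 4 + volume E / 4))
            = volume E := by
          rw [ENNReal.div_add_div_same, ENNReal.div_add_div_same, ENNReal.div_add_div_same,
            show volume E + (volume E + (volume E + volume E)) = 4 * volume E by ring,
            mul_comm (4:ℝ≥0∞) (volume E), mul_div_assoc, ENNReal.div_self (by norm_num) (by norm_num), mul_one]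
        have : volume E < volume E := by
          calc volume E
              ≤ volume (E ∩ {x | t/2 < (Complex.reCLM : ℂ →L[ℝ] ℝ) (g x)}) +
                (volume (E ∩ {x | t/2 < (-Complex.reCLM : ℂ →L[ℝ] ℝ) (g x)}) +
                (volume (E ∩ {x | t/2 < (Complex.imCLM : ℂ →L[ℝ] ℝ) (g x)}) +
                 volume (E ∩ {x | t/2 < (-Complex.imCLM : ℂ →L[ℝ] ℝ) (g x)}))) := by
                refine (measure_mono hcover).trans ?_
                refine (measure_union_le _ _).trans ?_
                refine add_le_add_right ((measure_union_le _ _).trans ?_) _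
                exact add_le_add_right (measure_union_le _ _) _
            _ < volume E / 4 + (volume E / 4 + (volume E / 4 + volume E / 4)) := by
                exact ENNReal.add_lt_add (hcon _ hu1)
                  (ENNReal.add_lt_add (hcon _ hu2)
                    (ENNReal.add_lt_add (hcon _ hu3) (hcon _ hu4)))
            _ = volume E := hsum4
        exact absurd this (lt_irrefl _)
      obtain ⟨u, hu, hquart⟩ := hquarter
      set Eb : Set (En N) := E ∩ {x | t/2 < u (g x)} with hEbdef
      have hEbm : MeasurableSet Eb :=
        hEm.inter (measurableSet_lt measurable_const (u.continuous.measurable.comp hgm))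
      have hEbb : IsBounded Eb := hEb.subset Set.inter_subset_left
      have hEb0 : 0 < volume Eb :=
        lt_of_lt_of_le (ENNReal.div_pos hE0.ne' (by norm_num)) hquart
      have hEbt : volume Eb < ⊤ :=
        lt_of_le_of_lt (measure_mono Set.inter_subset_left) hEt
      have haux := auxCase hf hfg hr0 ht h u hu hEbm hEbb hEb0 hEbt
        (fun x hx => le_of_lt hx.2)
      set β : ℝ := (volume Eb).toReal with hβdef
      have hβ : 0 < β := ENNReal.toReal_pos hEb0.ne' hEbt.ne
      set b : ℝ := (volume E).toReal with hbdef
      have hb : 0 < b := ENNReal.toReal_pos hE0.ne' hEt.ne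
      have hble : b ≤ 4 * β := by
        have h1 : volume E ≤ 4 * volume Eb := by
          have h2 : (4:ℝ≥0∞) * (volume E / 4) = volume E :=
            ENNReal.mul_div_cancel (by norm_num) (by norm_num)
          calc volume E = 4 * (volume E / 4) := h2.symm
            _ ≤ 4 * volume Eb := mul_le_mul_right hquart _
        have h3 := ENNReal.toReal_mono (by
          refine ENNReal.mul_ne_top (by norm_num) hEbt.ne) h1
        rwa [ENNReal.toReal_mul, ENNReal.toReal_ofNat] at h3
      have htb : t * b ^ (1/r) ≤ CA := by
        calc t * b ^ (1/r) ≤ t * (4 * β) ^ (1/r) := by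
              apply mul_le_mul_of_nonneg_left
                (Real.rpow_le_rpow hb.le hble hrinv.le) ht.le
          _ = 4 ^ (1/r) * (t * β ^ (1/r)) := by
              rw [Real.mul_rpow (by norm_num) hβ.le]; ring
          _ ≤ 4 ^ (1/r) * (4 * A) := by
              apply mul_le_mul_of_nonneg_left haux (by positivity)
          _ = CA := by
              rw [hCAdef, Real.rpow_add (by norm_num : (0:ℝ) < 4), Real.rpow_one]; ring
      have hbr : b ≤ (CA / t) ^ r := by
        have h1 : b ^ (1/r) ≤ CA / t := (le_div_iff₀ ht).mpr (by linarith [htb])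
        have h2 : (b ^ (1/r)) ^ r ≤ (CA / t) ^ r :=
          Real.rpow_le_rpow (Real.rpow_nonneg hb.le _) h1 hr0.le
        rwa [← Real.rpow_mul hb.le, one_div, inv_mul_cancel₀ hr0.ne', Real.rpow_one] at h2
      rw [← ENNReal.ofReal_toReal hEt.ne]
      exact ENNReal.ofReal_le_ofReal hbr
    -- exhaust S by bounded pieces
    have hex : S = ⋃ n : ℕ, (S ∩ closedBall (0 : En N) n) := by
      ext x
      simp only [Set.mem_iUnion, Set.mem_inter_iff, mem_closedBall, dist_zero_right]
      constructor
      · intro hx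
        obtain ⟨n, hn⟩ := exists_nat_ge ‖x‖
        exact ⟨n, hx, hn⟩
      · rintro ⟨n, hn, -⟩
        exact hn
    have hmono : Monotone (fun n : ℕ => S ∩ closedBall (0 : En N) n) := fun a c hac =>
      Set.inter_subset_inter_right _ (closedBall_subset_closedBall (Nat.cast_le.2 hac))
    have hS_le : volume S ≤ ENNReal.ofReal ((CA / t) ^ r) := by
      rw [hex, (hmono.directed_le).measure_iUnion]
      exact iSup_le fun n => key _ (hSm.inter measurableSet_closedBall)
        (isBounded_closedBall.subset Set.inter_subset_right) Set.inter_subset_left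
    calc ENNReal.ofReal t * (volume S) ^ (1/r)
        ≤ ENNReal.ofReal t * (ENNReal.ofReal ((CA / t) ^ r)) ^ (1/r) :=
          mul_le_mul_right (ENNReal.rpow_le_rpow hS_le hrinv.le) _
      _ = ENNReal.ofReal (4 ^ ((1:ℝ) + 1/r) * A) := by
          rw [ENNReal.ofReal_rpow_of_nonneg (by positivity) hrinv.le,
            ← Real.rpow_mul (by positivity), mul_one_div, div_self hr0.ne', Real.rpow_one,
            ← ENNReal.ofReal_mul ht.le,
            show t * (CA / t) = CA from by field_simp]
end
end

section
/- Let n,l ≥ 1, 1<u<∞ with 1/u+1/u'=1, and s > ln/u. Let B be a proper subset of {1,…,l}, with complement B^c and cardinality #B. For each l_0 ∈ B^c define S_B^{l_0}(s) := {x∈R_B : (#B+1)/u + Σ_{i∈B^c∖{l_0}} x_i < s/n}. Then the convex hull of ∪_{l_0∈B^c} S_B^{l_0}(s) equals S_B(s): convh(∪_{l_0∈B^c} S_B^{l_0}(s)) = S_B(s). -/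
open scoped BigOperators

noncomputable section

/-- The region `R_B ⊆ (0,1)^l`. -/
def RBset {l : ℕ} (B : Finset (Fin l)) (u : ℝ) : Set (Fin l → ℝ) :=
  {x | ∀ i : Fin l, (i ∈ B → 0 < x i ∧ x i ≤ 1/u) ∧ (i ∉ B → 1/u < x i ∧ x i < 1)}

/-- The region `S_B(s)`. -/
def SBset {l : ℕ} (B : Finset (Fin l)) (u u' s nn : ℝ) : Set (Fin l → ℝ) :=
  {x ∈ RBset B u | (∑ i, x i) - 1/u' < s/nn + ∑ i ∈ B, (x i - 1/u)}

/-- The region `S_B^{l_0}(s)` for `l_0 ∈ B^c`. -/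
def SBl0set {l : ℕ} (B : Finset (Fin l)) (u s nn : ℝ) (l0 : Fin l) : Set (Fin l → ℝ) :=
  {x ∈ RBset B u | ((B.card : ℝ) + 1)/u + ∑ i ∈ Bᶜ.erase l0, x i < s/nn}

/-- Auxiliary closed "corner slab" sets. -/
def Vbar {l : ℕ} (C : Finset (Fin l)) (α β M' : ℝ) (x₀ : Fin l → ℝ) (j : Fin l) :
    Set (Fin l → ℝ) :=
  {z | (∀ i ∈ C, α ≤ z i ∧ z i ≤ β) ∧ (∀ i ∉ C, z i = x₀ i) ∧
    ∑ i ∈ C.erase j, z i ≤ M'}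

lemma combo_lt {a b x y c : ℝ} (ha : 0 ≤ a) (hb : 0 ≤ b) (hab : a + b = 1)
    (hx : x < c) (hy : y < c) : a*x + b*y < c := by
  have hb' : b = 1 - a := by linarith
  subst hb'
  rcases eq_or_lt_of_le ha with h | h
  · rw [← h]; simp; linarith
  · nlinarith [mul_pos h (sub_pos.mpr hx), mul_nonneg hb (sub_nonneg.mpr hy.le)]

lemma combo_le {a b x y c : ℝ} (ha : 0 ≤ a) (hb : 0 ≤ b) (hab : a + b = 1)
    (hx : x ≤ c) (hy : y ≤ c) : a*x + b*y ≤ c := by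
  have hb' : b = 1 - a := by linarith
  subst hb'
  nlinarith [mul_nonneg ha (sub_nonneg.mpr hx), mul_nonneg hb (sub_nonneg.mpr hy)]

lemma combo_gt {a b x y c : ℝ} (ha : 0 ≤ a) (hb : 0 ≤ b) (hab : a + b = 1)
    (hx : c < x) (hy : c < y) : c < a*x + b*y := by
  have hb' : b = 1 - a := by linarith
  subst hb'
  rcases eq_or_lt_of_le ha with h | h
  · rw [← h]; simp; linarith
  · nlinarith [mul_pos h (sub_pos.mpr hx), mul_nonneg hb (sub_nonneg.mpr hy.le)]

/-- Base case: at most one coordinate of `z` (within `C`) is not at `α` or `β`. -/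
lemma vbar_base {l : ℕ} (C : Finset (Fin l)) (hC : C.Nonempty) (α β M' : ℝ)
    (x₀ : Fin l → ℝ) (hα : ((C.card : ℝ) - 1) * α ≤ M')
    (z : Fin l → ℝ)
    (hcard : (C.filter (fun i => z i ≠ α ∧ z i ≠ β)).card ≤ 1)
    (hbox : ∀ i ∈ C, α ≤ z i ∧ z i ≤ β)
    (hoff : ∀ i ∉ C, z i = x₀ i)
    (hsum : ∑ i ∈ C, z i ≤ M' + β) :
    ∃ j ∈ C, z ∈ Vbar C α β M' x₀ j := by
  by_cases hβ : ∃ j ∈ C, z j = β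
  · obtain ⟨j, hj, hzj⟩ := hβ
    refine ⟨j, hj, hbox, hoff, ?_⟩
    have h := Finset.sum_erase_add C z hj
    rw [hzj] at h
    linarith
  · push_neg at hβ
    have key : ∀ j ∈ C, (∀ i ∈ C.erase j, z i = α) → z ∈ Vbar C α β M' x₀ j := by
      intro j hj hall
      refine ⟨hbox, hoff, ?_⟩
      have h1 : ∑ i ∈ C.erase j, z i = ((C.erase j).card : ℝ) * α := by
        rw [Finset.sum_congr rfl hall, Finset.sum_const, nsmul_eq_mul]
      have hcpos : 1 ≤ C.card := Finset.card_pos.mpr ⟨j, hj⟩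
      have h2 : ((C.erase j).card : ℝ) = (C.card : ℝ) - 1 := by
        rw [Finset.card_erase_of_mem hj, Nat.cast_sub hcpos, Nat.cast_one]
      rw [h1, h2]; exact hα
    by_cases hfr : ∃ r ∈ C, z r ≠ α
    · obtain ⟨r, hr, hzr⟩ := hfr
      refine ⟨r, hr, key r hr ?_⟩
      intro i hi
      by_contra hzi
      have hiC := Finset.mem_of_mem_erase hi
      have hir : i ≠ r := Finset.ne_of_mem_erase hi
      have hsub : ({i, r} : Finset (Fin l)) ⊆ C.filter (fun i => z i ≠ α ∧ z i ≠ β) := by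
        intro w hw
        rcases Finset.mem_insert.mp hw with rfl | hw
        · exact Finset.mem_filter.mpr ⟨hiC, hzi, hβ w hiC⟩
        · rw [Finset.mem_singleton] at hw
          subst hw
          exact Finset.mem_filter.mpr ⟨hr, hzr, hβ w hr⟩
      have h2 : 2 ≤ (C.filter (fun i => z i ≠ α ∧ z i ≠ β)).card := by
        have := Finset.card_le_card hsub
        rwa [Finset.card_pair hir] at this
      omega
    · push_neg at hfr
      obtain ⟨j, hj⟩ := hC
      exact ⟨j, hj, key j hj fun i hi => hfr i (Finset.mem_of_mem_erase hi)⟩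

/-- Core lemma: any point of the closed slab lies in the convex hull of the `Vbar` sets. -/
lemma vbar_core {l : ℕ} (C : Finset (Fin l)) (hC : C.Nonempty) (α β M' : ℝ)
    (x₀ : Fin l → ℝ) (hα : ((C.card : ℝ) - 1) * α ≤ M') :
    ∀ N : ℕ, ∀ z : Fin l → ℝ,
      (C.filter (fun i => z i ≠ α ∧ z i ≠ β)).card ≤ N →
      (∀ i ∈ C, α ≤ z i ∧ z i ≤ β) → (∀ i ∉ C, z i = x₀ i) →
      (∑ i ∈ C, z i) ≤ M' + β →
      z ∈ convexHull ℝ (⋃ j ∈ C, Vbar C α β M' x₀ j) := by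
  intro N
  induction N with
  | zero =>
    intro z h0 hbox hoff hsum
    obtain ⟨j, hj, hmem⟩ := vbar_base C hC α β M' x₀ hα z (by omega) hbox hoff hsum
    exact subset_convexHull ℝ _ (Set.mem_biUnion hj hmem)
  | succ N ih =>
    intro z hN hbox hoff hsum
    by_cases h1 : (C.filter (fun i => z i ≠ α ∧ z i ≠ β)).card ≤ 1
    · obtain ⟨j, hj, hmem⟩ := vbar_base C hC α β M' x₀ hα z h1 hbox hoff hsum
      exact subset_convexHull ℝ _ (Set.mem_biUnion hj hmem)
    · have h2 : 1 < (C.filter (fun i => z i ≠ α ∧ z i ≠ β)).card := by omega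
      obtain ⟨p, hp, q, hq, hpq⟩ := Finset.one_lt_card.mp h2
      obtain ⟨hpC, hzp⟩ := Finset.mem_filter.mp hp
      obtain ⟨hqC, hzq⟩ := Finset.mem_filter.mp hq
      have hpα : α < z p := lt_of_le_of_ne (hbox p hpC).1 (Ne.symm hzp.1)
      have hpβ : z p < β := lt_of_le_of_ne (hbox p hpC).2 hzp.2
      have hqα : α < z q := lt_of_le_of_ne (hbox q hqC).1 (Ne.symm hzq.1)
      have hqβ : z q < β := lt_of_le_of_ne (hbox q hqC).2 hzq.2
      set t1 : ℝ := min (β - z p) (z q - α) with ht1def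
      set t2 : ℝ := min (z p - α) (β - z q) with ht2def
      have ht1 : 0 < t1 := lt_min (by linarith) (by linarith)
      have ht2 : 0 < t2 := lt_min (by linarith) (by linarith)
      have ht1a : t1 ≤ β - z p := min_le_left _ _
      have ht1b : t1 ≤ z q - α := min_le_right _ _
      have ht2a : t2 ≤ z p - α := min_le_left _ _
      have ht2b : t2 ≤ β - z q := min_le_right _ _
      set zp : Fin l → ℝ :=
        fun i => z i + ((if i = p then t1 else 0) - (if i = q then t1 else 0)) with hzpdef
      set zm : Fin l → ℝ :=
        fun i => z i - ((if i = p then t2 else 0) - (if i = q then t2 else 0)) with hzmdef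
      have hqp : q ≠ p := Ne.symm hpq
      have hzpp : zp p = z p + t1 := by simp [hzpdef, hpq]
      have hzpq : zp q = z q - t1 := by simp [hzpdef, hqp, sub_eq_add_neg]
      have hzpe : ∀ i, i ≠ p → i ≠ q → zp i = z i := by
        intro i hip hiq; simp [hzpdef, hip, hiq]
      have hzmp : zm p = z p - t2 := by simp [hzmdef, hpq]
      have hzmq : zm q = z q + t2 := by simp [hzmdef, hqp, sub_eq_add_neg]
      have hzme : ∀ i, i ≠ p → i ≠ q → zm i = z i := by
        intro i hip hiq; simp [hzmdef, hip, hiq]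
      -- box conditions
      have hbox_p : ∀ i ∈ C, α ≤ zp i ∧ zp i ≤ β := by
        intro i hi
        rcases eq_or_ne i p with rfl | hip
        · rw [hzpp]; constructor <;> linarith
        rcases eq_or_ne i q with rfl | hiq
        · rw [hzpq]; constructor <;> linarith
        · rw [hzpe i hip hiq]; exact hbox i hi
      have hbox_m : ∀ i ∈ C, α ≤ zm i ∧ zm i ≤ β := by
        intro i hi
        rcases eq_or_ne i p with rfl | hip
        · rw [hzmp]; constructor <;> linarith
        rcases eq_or_ne i q with rfl | hiq
        · rw [hzmq]; constructor <;> linarith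
        · rw [hzme i hip hiq]; exact hbox i hi
      -- off conditions
      have hoff_p : ∀ i ∉ C, zp i = x₀ i := by
        intro i hi
        have hip : i ≠ p := fun h => hi (h ▸ hpC)
        have hiq : i ≠ q := fun h => hi (h ▸ hqC)
        rw [hzpe i hip hiq]; exact hoff i hi
      have hoff_m : ∀ i ∉ C, zm i = x₀ i := by
        intro i hi
        have hip : i ≠ p := fun h => hi (h ▸ hpC)
        have hiq : i ≠ q := fun h => hi (h ▸ hqC)
        rw [hzme i hip hiq]; exact hoff i hi
      -- sums
      have hsum_p : ∑ i ∈ C, zp i = ∑ i ∈ C, z i := by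
        simp only [hzpdef]
        rw [Finset.sum_add_distrib, Finset.sum_sub_distrib,
          Finset.sum_ite_eq' C p (fun _ => t1), Finset.sum_ite_eq' C q (fun _ => t1),
          if_pos hpC, if_pos hqC]
        ring
      have hsum_m : ∑ i ∈ C, zm i = ∑ i ∈ C, z i := by
        simp only [hzmdef]
        rw [Finset.sum_sub_distrib, Finset.sum_sub_distrib,
          Finset.sum_ite_eq' C p (fun _ => t2), Finset.sum_ite_eq' C q (fun _ => t2),
          if_pos hpC, if_pos hqC]
        ring
      -- filter cardinalities decrease
      have hsub_p : C.filter (fun i => zp i ≠ α ∧ zp i ≠ β) ⊆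
          C.filter (fun i => z i ≠ α ∧ z i ≠ β) := by
        intro i hi
        obtain ⟨hiC, hpred⟩ := Finset.mem_filter.mp hi
        rcases eq_or_ne i p with rfl | hip
        · exact hp
        rcases eq_or_ne i q with rfl | hiq
        · exact hq
        · rw [hzpe i hip hiq] at hpred
          exact Finset.mem_filter.mpr ⟨hiC, hpred⟩
      have hsub_m : C.filter (fun i => zm i ≠ α ∧ zm i ≠ β) ⊆
          C.filter (fun i => z i ≠ α ∧ z i ≠ β) := by
        intro i hi
        obtain ⟨hiC, hpred⟩ := Finset.mem_filter.mp hi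
        rcases eq_or_ne i p with rfl | hip
        · exact hp
        rcases eq_or_ne i q with rfl | hiq
        · exact hq
        · rw [hzme i hip hiq] at hpred
          exact Finset.mem_filter.mpr ⟨hiC, hpred⟩
      have hlt_p : (C.filter (fun i => zp i ≠ α ∧ zp i ≠ β)).card <
          (C.filter (fun i => z i ≠ α ∧ z i ≠ β)).card := by
        apply Finset.card_lt_card
        rw [Finset.ssubset_iff_of_subset hsub_p]
        rcases le_total (β - z p) (z q - α) with hm | hm
        · have hzb : zp p = β := by
            rw [hzpp, ht1def, min_eq_left hm]; ring
          exact ⟨p, hp, fun hmem => (Finset.mem_filter.mp hmem).2.2 hzb⟩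
        · have hza : zp q = α := by
            rw [hzpq, ht1def, min_eq_right hm]; ring
          exact ⟨q, hq, fun hmem => (Finset.mem_filter.mp hmem).2.1 hza⟩
      have hlt_m : (C.filter (fun i => zm i ≠ α ∧ zm i ≠ β)).card <
          (C.filter (fun i => z i ≠ α ∧ z i ≠ β)).card := by
        apply Finset.card_lt_card
        rw [Finset.ssubset_iff_of_subset hsub_m]
        rcases le_total (z p - α) (β - z q) with hm | hm
        · have hza : zm p = α := by
            rw [hzmp, ht2def, min_eq_left hm]; ring
          exact ⟨p, hp, fun hmem => (Finset.mem_filter.mp hmem).2.1 hza⟩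
        · have hzb : zm q = β := by
            rw [hzmq, ht2def, min_eq_right hm]; ring
          exact ⟨q, hq, fun hmem => (Finset.mem_filter.mp hmem).2.2 hzb⟩
      have hmem_p := ih zp (by omega) hbox_p hoff_p (by rw [hsum_p]; exact hsum)
      have hmem_m := ih zm (by omega) hbox_m hoff_m (by rw [hsum_m]; exact hsum)
      -- convex combination
      have htt : 0 < t1 + t2 := by linarith
      have hz_eq : z = (t2/(t1+t2)) • zp + (t1/(t1+t2)) • zm := by
        funext i
        show z i = (t2/(t1+t2)) * zp i + (t1/(t1+t2)) * zm i
        rcases eq_or_ne i p with rfl | hip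
        · rw [hzpp, hzmp]; field_simp; ring
        rcases eq_or_ne i q with rfl | hiq
        · rw [hzpq, hzmq]; field_simp; ring
        · rw [hzpe i hip hiq, hzme i hip hiq]; field_simp; ring
      rw [hz_eq]
      exact convex_convexHull ℝ _ hmem_p hmem_m
        (div_nonneg ht2.le htt.le) (div_nonneg ht1.le htt.le)
        (by field_simp; ring)

set_option maxHeartbeats 1600000 in
/-- Proposition 5.3 / `pp44u` of the paper:  for a proper subset `B ⊆ {1,…,l}` and
`s > ln/u`, the convex hull of `∪_{l_0∈B^c} S_B^{l_0}(s)` equals `S_B(s)`. -/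
theorem statement14
    (n l : ℕ) (hn : 1 ≤ n) (hl : 1 ≤ l)
    (u u' : ℝ) (hu1 : 1 < u) (huu' : 1/u + 1/u' = 1)
    (s : ℝ) (hs : (l:ℝ)*n/u < s)
    (B : Finset (Fin l)) (hB : B ≠ Finset.univ) :
    convexHull ℝ (⋃ l0 ∈ Bᶜ, SBl0set B u s n l0) = SBset B u u' s n := by
  have hu0 : (0:ℝ) < u := by linarith
  have hn0 : (0:ℝ) < (n:ℝ) := by exact_mod_cast Nat.pos_of_ne_zero (by omega)
  have hu'e : 1/u' = 1 - 1/u := by linarith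
  have hCne : (Bᶜ : Finset (Fin l)).Nonempty := by
    rw [Finset.nonempty_iff_ne_empty, Ne, Finset.compl_eq_empty_iff]
    exact hB
  have hcards : (B.card : ℝ) + ((Bᶜ : Finset (Fin l)).card : ℝ) = (l : ℝ) := by
    have := Finset.card_add_card_compl B
    rw [Fintype.card_fin] at this
    exact_mod_cast this
  have hmpos : 1 ≤ ((Bᶜ : Finset (Fin l)).card : ℝ) := by
    exact_mod_cast Finset.card_pos.mpr hCne
  apply Set.Subset.antisymm
  · -- easy direction
    apply convexHull_min
    · intro x hx
      rw [Set.mem_iUnion₂] at hx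
      obtain ⟨l0, hl0, hxR, hxineq⟩ := hx
      refine ⟨hxR, ?_⟩
      have hl0B : l0 ∉ B := Finset.mem_compl.mp hl0
      have hx1 : x l0 < 1 := ((hxR l0).2 hl0B).2
      have hsplit : ∑ i ∈ B, x i + ∑ i ∈ Bᶜ, x i = ∑ i, x i := B.sum_add_sum_compl x
      have herase : ∑ i ∈ Bᶜ.erase l0, x i + x l0 = ∑ i ∈ Bᶜ, x i :=
        Finset.sum_erase_add _ _ hl0
      have hconstB : ∑ i ∈ B, (x i - 1/u) = ∑ i ∈ B, x i - (B.card:ℝ)*(1/u) := by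
        rw [Finset.sum_sub_distrib, Finset.sum_const, nsmul_eq_mul]
      have hdiv : ((B.card:ℝ)+1)/u = (B.card:ℝ)*(1/u) + 1/u := by ring
      rw [hdiv] at hxineq
      rw [hconstB]
      linarith
    · -- convexity of SBset
      intro x hx y hy a b ha hb hab
      obtain ⟨hxR, hxI⟩ := hx
      obtain ⟨hyR, hyI⟩ := hy
      have happ : ∀ i, (a • x + b • y) i = a * x i + b * y i := fun i => rfl
      constructor
      · intro i
        constructor
        · intro hiB
          rw [happ]
          exact ⟨combo_gt ha hb hab ((hxR i).1 hiB).1 ((hyR i).1 hiB).1,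
            combo_le ha hb hab ((hxR i).1 hiB).2 ((hyR i).1 hiB).2⟩
        · intro hiB
          rw [happ]
          exact ⟨combo_gt ha hb hab ((hxR i).2 hiB).1 ((hyR i).2 hiB).1,
            combo_lt ha hb hab ((hxR i).2 hiB).2 ((hyR i).2 hiB).2⟩
      · have h1 : ∑ i, (a • x + b • y) i = a * ∑ i, x i + b * ∑ i, y i := by
          simp only [happ]
          rw [Finset.sum_add_distrib, ← Finset.mul_sum, ← Finset.mul_sum]
        have h2 : ∑ i ∈ B, ((a • x + b • y) i - 1/u) =
            a * (∑ i ∈ B, (x i - 1/u)) + b * (∑ i ∈ B, (y i - 1/u)) := by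
          rw [Finset.mul_sum, Finset.mul_sum, ← Finset.sum_add_distrib]
          apply Finset.sum_congr rfl
          intro i _
          rw [happ]
          linear_combination ((1:ℝ)/u) * hab
        have hx2 : (∑ i, x i) - 1/u' - ∑ i ∈ B, (x i - 1/u) < s/n := by linarith
        have hy2 : (∑ i, y i) - 1/u' - ∑ i ∈ B, (y i - 1/u) < s/n := by linarith
        have hcomb := combo_lt ha hb hab hx2 hy2
        have hre : a*(1/u') + b*(1/u') = 1/u' := by rw [← add_mul, hab, one_mul]
        rw [h1, h2]
        nlinarith [hcomb, hre]
  · -- hard direction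
    intro x hx
    obtain ⟨hxR, hxI⟩ := hx
    set C := (Bᶜ : Finset (Fin l)) with hCdef
    set K : ℝ := s/n - ((B.card:ℝ)+1)/u with hKdef
    have hbox : ∀ i ∈ C, 1/u < x i ∧ x i < 1 := by
      intro i hi
      exact (hxR i).2 (Finset.mem_compl.mp hi)
    -- sum bound
    have hsplit : ∑ i ∈ B, x i + ∑ i ∈ C, x i = ∑ i, x i := B.sum_add_sum_compl x
    have hconstB : ∑ i ∈ B, (x i - 1/u) = ∑ i ∈ B, x i - (B.card:ℝ)*(1/u) := by
      rw [Finset.sum_sub_distrib, Finset.sum_const, nsmul_eq_mul]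
    have hsumC : ∑ i ∈ C, x i < K + 1 := by
      have hdiv : ((B.card:ℝ)+1)/u = (B.card:ℝ)*(1/u) + 1/u := by ring
      rw [hKdef, hdiv]
      rw [hconstB] at hxI
      linarith
    -- K bound
    have hlu : (l:ℝ)/u < s/n := by
      rw [div_lt_div_iff₀ hu0 hn0]
      calc (l:ℝ) * n = (l:ℝ)*n/u * u := by field_simp
        _ < s * u := by
          apply mul_lt_mul_of_pos_right hs hu0
    have hK : ((C.card:ℝ) - 1) * (1/u) < K := by
      have e : ((C.card:ℝ) - 1) * (1/u) + (((B.card:ℝ))+1) * (1/u) = (l:ℝ) * (1/u) := by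
        rw [← hcards]; ring
      have e2 : (l:ℝ) * (1/u) = (l:ℝ)/u := by ring
      have e3 : (((B.card:ℝ))+1) * (1/u) = ((B.card:ℝ)+1)/u := by ring
      rw [hKdef]
      nlinarith [e, e2, e3, hlu]
    -- choose ε
    set δ1 : ℝ := C.inf' hCne (fun i => min (x i - 1/u) (1 - x i)) with hδ1def
    have hδ1pos : 0 < δ1 := by
      rw [hδ1def, Finset.lt_inf'_iff]
      intro i hi
      exact lt_min (by linarith [(hbox i hi).1]) (by linarith [(hbox i hi).2])
    set δ : ℝ := min δ1 (min (K + 1 - ∑ i ∈ C, x i) (K - ((C.card:ℝ) - 1) * (1/u))) with hδdef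
    have hδpos : 0 < δ :=
      lt_min hδ1pos (lt_min (by linarith) (by linarith))
    set ε : ℝ := δ / ((C.card:ℝ) + 2) with hεdef
    have hden : (0:ℝ) < (C.card:ℝ) + 2 := by linarith
    have hεpos : 0 < ε := div_pos hδpos hden
    have hεδ : ((C.card:ℝ) + 2) * ε = δ := by
      rw [hεdef]; field_simp
    have hm0 : (0:ℝ) ≤ (C.card:ℝ) := Nat.cast_nonneg _
    have hemul : (0:ℝ) ≤ (C.card:ℝ) * ε := mul_nonneg hm0 hεpos.le
    have hεle : ε ≤ δ := by linarith
    have h2ε : 2 * ε ≤ δ := by linarith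
    have hmε : (C.card:ℝ) * ε ≤ δ := by linarith
    have hδ1le : δ ≤ δ1 := min_le_left _ _
    have hδsum : δ ≤ K + 1 - ∑ i ∈ C, x i := le_trans (min_le_right _ _) (min_le_left _ _)
    have hδK : δ ≤ K - ((C.card:ℝ) - 1) * (1/u) := le_trans (min_le_right _ _) (min_le_right _ _)
    set α : ℝ := 1/u + ε with hαdef
    set β : ℝ := 1 - ε with hβdef
    set M' : ℝ := K - ε with hM'def
    have hxin : ∀ i ∈ C, α ≤ x i ∧ x i ≤ β := by
      intro i hi
      have h1 : δ1 ≤ min (x i - 1/u) (1 - x i) := Finset.inf'_le _ hi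
      have h2 : δ1 ≤ x i - 1/u := le_trans h1 (min_le_left _ _)
      have h3 : δ1 ≤ 1 - x i := le_trans h1 (min_le_right _ _)
      constructor
      · rw [hαdef]; linarith
      · rw [hβdef]; linarith
    have hαcond : ((C.card:ℝ) - 1) * α ≤ M' := by
      rw [hαdef, hM'def]
      nlinarith
    have hxsum : ∑ i ∈ C, x i ≤ M' + β := by
      rw [hM'def, hβdef]; linarith
    have hcore := vbar_core C hCne α β M' x
      hαcond (C.filter (fun i => x i ≠ α ∧ x i ≠ β)).card x le_rfl hxin
      (fun _ _ => rfl) hxsum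
    refine convexHull_mono ?_ hcore
    intro z hz
    rw [Set.mem_iUnion₂] at hz ⊢
    obtain ⟨j, hj, hzbox, hzoff, hzsum⟩ := hz
    refine ⟨j, hj, ?_, ?_⟩
    · intro i
      constructor
      · intro hiB
        have hiC : i ∉ C := by
          rw [hCdef, Finset.mem_compl]; exact fun h => h hiB
        rw [hzoff i hiC]
        exact (hxR i).1 hiB
      · intro hiB
        have hiC : i ∈ C := Finset.mem_compl.mpr hiB
        obtain ⟨hz1, hz2⟩ := hzbox i hiC
        constructor
        · rw [hαdef] at hz1; linarith
        · rw [hβdef] at hz2; linarith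
    · have : ∑ i ∈ C.erase j, z i ≤ K - ε := hzsum
      rw [hKdef] at this
      have hεK : 0 < ε := hεpos
      show ((B.card : ℝ) + 1)/u + ∑ i ∈ Bᶜ.erase j, z i < s/n
      rw [← hCdef]
      linarith
end
end
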